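/- A priori bound for the approximate problem: Assume (M) and (J1') hold and let ε, R, M > 0 and k ∈ ℕ. If u ∈ C²(closure of B_R) is a classical solution of u − T_M[L^R_k[u,Du]] − εΔu = f in B_R with u = 0 on ∂B_R, where f : ℝ^N → ℝ is bounded and continuous, then sup_{x ∈ B_R} |u(x)| ≤ sup_{x ∈ ℝ^N} |f(x)|. -/

import Mathlib

set_option autoImplicit false

open MeasureTheory Filter Topology Metric
open scoped InnerProductSpace ENNReal NNReal

noncomputable section

/-- `ℝ^n` as a Euclidean space. -/
abbrev RE (n : ℕ) : Type := EuclideanSpace ℝ (Fin n)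

/-- The truncation `T_M(s) = min(max(s,-M),M)`. -/
def TM (M s : ℝ) : ℝ := min (max s (-M)) M

/-- The orthogonal projection onto the closed ball of radius `R` centered at the origin. -/
def projR {N : ℕ} (R : ℝ) (x : RE N) : RE N := if ‖x‖ ≤ R then x else (R / ‖x‖) • x

/-- The rescaled mollifier `ρ_k(z) = k^P ρ(kz)`. -/
def rhok {P : ℕ} (ρ : RE P → ℝ) (k : ℕ) (z : RE P) : ℝ := (k : ℝ) ^ P * ρ ((k : ℝ) • z)

/-- The annulus `{ 1/k < |z| < k }`. -/
def annulus (P : ℕ) (k : ℕ) : Set (RE P) := {z : RE P | 1 / (k : ℝ) < ‖z‖ ∧ ‖z‖ < (k : ℝ)}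

/-- The mollified truncated measure `μ_{1,k} = ρ_k ∗ (μ₁ · 1_{1/k<|z|<k})`. -/
def mollify1 {P : ℕ} (ρ : RE P → ℝ) (k : ℕ) (μ₁ : Measure (RE P)) : Measure (RE P) :=
  Measure.map (fun q : RE P × RE P => q.1 + q.2)
    ((volume.withDensity (fun x => ENNReal.ofReal (rhok ρ k x))).prod
      (μ₁.restrict (annulus P k)))

/-- The mollified measure `μ_{2,k} = ρ_k ∗ μ₂`. -/
def mollify2 {P : ℕ} (ρ : RE P → ℝ) (k : ℕ) (μ₂ : Measure (RE P)) : Measure (RE P) :=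
  Measure.map (fun q : RE P × RE P => q.1 + q.2)
    ((volume.withDensity (fun x => ENNReal.ofReal (rhok ρ k x))).prod μ₂)

/-- The gradient of `v` on the closed ball `B̄_R` (computed with derivatives within). -/
def gradW {N : ℕ} (R : ℝ) (v : RE N → ℝ) (x : RE N) : RE N :=
  ∑ i : Fin N, (fderivWithin ℝ v (closedBall (0 : RE N) R) x (EuclideanSpace.single i (1:ℝ))) •
    EuclideanSpace.single i (1 : ℝ)

/-- The Laplacian of `v` on the closed ball `B̄_R` (computed with derivatives within). -/
def lapW {N : ℕ} (R : ℝ) (v : RE N → ℝ) (x : RE N) : ℝ :=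
  ∑ i : Fin N, fderivWithin ℝ
    (fun y => fderivWithin ℝ v (closedBall (0 : RE N) R) y (EuclideanSpace.single i (1:ℝ)))
    (closedBall (0 : RE N) R) x (EuclideanSpace.single i (1:ℝ))

/-- The nonlocal operator `L^R_k` of the approximate problem, with jumps projected back
onto the closed ball `B̄_R`; to be used with the mollified measures `μ_{1,k}, μ_{2,k}`. -/
def LRk {N P : ℕ} (ν₁ ν₂ : Measure (RE P)) (j₁ j₂ : RE N → RE P → RE N)
    (R : ℝ) (v : RE N → ℝ) (x : RE N) : ℝ :=
  (∫ z, (v (projR R (x + j₁ (gradW R v x) z)) - v x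
      - (if ‖z‖ < 1 then ⟪gradW R v x, j₁ (gradW R v x) z⟫_ℝ else 0)) ∂ν₁)
  + ∫ z, (v (projR R (x + j₂ (gradW R v x) z)) - v x) ∂ν₂

/-- 1D second derivative test at a local max. -/
lemma oneD_max {g G : ℝ → ℝ} {L : ℝ} (hmax : IsLocalMax g 0)
    (hg : ∀ᶠ t in 𝓝 (0:ℝ), HasDerivAt g (G t) t) (hG0 : G 0 = 0)
    (hG : HasDerivAt G L 0) : L ≤ 0 := by
  by_contra hL
  push_neg at hL
  have hslope : Tendsto (slope G 0) (𝓝[≠] (0:ℝ)) (𝓝 L) :=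
    hasDerivAt_iff_tendsto_slope.1 hG
  have h1 : ∀ᶠ t in 𝓝[≠] (0:ℝ), 0 < slope G 0 t := hslope.eventually (eventually_gt_nhds hL)
  have h2 : ∀ᶠ t in 𝓝 (0:ℝ), t ≠ 0 → 0 < slope G 0 t := eventually_nhdsWithin_iff.1 h1
  have h3 : ∀ᶠ t in 𝓝 (0:ℝ),
      (t ≠ 0 → 0 < slope G 0 t) ∧ HasDerivAt g (G t) t ∧ g t ≤ g 0 :=
    h2.and (hg.and hmax)
  rcases Metric.eventually_nhds_iff.1 h3 with ⟨δ, hδ, hP⟩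
  have key : ∀ t : ℝ, |t| < δ →
      (t ≠ 0 → 0 < slope G 0 t) ∧ HasDerivAt g (G t) t ∧ g t ≤ g 0 := by
    intro t ht
    exact hP (by simpa [Real.dist_eq] using ht)
  set δ' := δ / 2 with hδ'
  have hδ'pos : 0 < δ' := by positivity
  have hmem : ∀ t ∈ Set.Ico (0:ℝ) δ', |t| < δ := by
    intro t ht
    rw [abs_of_nonneg ht.1]
    linarith [ht.2]
  have hcont : ContinuousOn g (Set.Ico (0:ℝ) δ') := fun t ht =>
    ((key t (hmem t ht)).2.1.continuousAt).continuousWithinAt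
  have hpos : ∀ t ∈ interior (Set.Ico (0:ℝ) δ'), 0 < deriv g t := by
    intro t ht
    rw [interior_Ico] at ht
    have h := key t (hmem t ⟨le_of_lt ht.1, ht.2⟩)
    rw [h.2.1.deriv]
    have hs := h.1 (ne_of_gt ht.1)
    rw [slope_def_field] at hs
    have : G t / t > 0 := by simpa [hG0] using hs
    exact (div_pos_iff.1 this).elim (fun h' => h'.1)
      (fun h' => absurd h'.2 (not_lt.2 (le_of_lt ht.1)))
  have hmono : StrictMonoOn g (Set.Ico (0:ℝ) δ') :=
    strictMonoOn_of_deriv_pos (convex_Ico _ _) hcont hpos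
  have h0mem : (0:ℝ) ∈ Set.Ico (0:ℝ) δ' := ⟨le_refl _, hδ'pos⟩
  have htmem : δ'/2 ∈ Set.Ico (0:ℝ) δ' := ⟨by positivity, by linarith⟩
  have := hmono h0mem htmem (by positivity)
  have := (key (δ'/2) (hmem _ htmem)).2.2
  linarith

lemma oneD_min {g G : ℝ → ℝ} {L : ℝ} (hmin : IsLocalMin g 0)
    (hg : ∀ᶠ t in 𝓝 (0:ℝ), HasDerivAt g (G t) t) (hG0 : G 0 = 0)
    (hG : HasDerivAt G L 0) : 0 ≤ L := by
  have := oneD_max (g := fun t => -g t) (G := fun t => -G t) (L := -L)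
    hmin.neg (hg.mono fun t ht => ht.neg) (by simp [hG0]) hG.neg
  linarith

lemma deriv_data {N : ℕ} {R : ℝ} {u : RE N → ℝ} {x₀ : RE N}
    (hu : ContDiffOn ℝ 2 u (closedBall (0:RE N) R)) (hx : x₀ ∈ ball (0:RE N) R)
    (e : RE N) :
    (∀ᶠ t in 𝓝 (0:ℝ), HasDerivAt (fun s : ℝ => u (x₀ + s • e))
        (fderiv ℝ u (x₀ + t • e) e) t)
    ∧ HasDerivAt (fun t : ℝ => fderiv ℝ u (x₀ + t • e) e)
        (fderivWithin ℝ (fun y => fderivWithin ℝ u (closedBall (0:RE N) R) y e)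
          (closedBall (0:RE N) R) x₀ e) 0 := by
  set S := closedBall (0:RE N) R with hS
  have hcA : ∀ t : ℝ, HasDerivAt (fun s : ℝ => x₀ + s • e) e t := fun t =>
    by simpa using ((hasDerivAt_id t).smul_const e).const_add x₀
  have h0 : x₀ + (0:ℝ) • e = x₀ := by rw [zero_smul, add_zero]
  have hball : ∀ᶠ t in 𝓝 (0:ℝ), (x₀ + t • e) ∈ ball (0:RE N) R := by
    have hc : ContinuousAt (fun s : ℝ => x₀ + s • e) 0 := (hcA 0).continuousAt
    exact hc.eventually_mem (by rw [h0]; exact isOpen_ball.mem_nhds hx)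
  have hSnhds : ∀ {y : RE N}, y ∈ ball (0:RE N) R → S ∈ 𝓝 y := fun hy =>
    Filter.mem_of_superset (isOpen_ball.mem_nhds hy) ball_subset_closedBall
  constructor
  · filter_upwards [hball] with t ht
    have hdiff : DifferentiableAt ℝ u (x₀ + t • e) :=
      (hu.contDiffAt (hSnhds ht)).differentiableAt (by norm_num)
    exact hdiff.hasFDerivAt.comp_hasDerivAt t (hcA t)
  · have hx₀S : S ∈ 𝓝 x₀ := hSnhds hx
    have heq1 : fderivWithin ℝ (fun y => fderivWithin ℝ u S y e) S x₀ e
        = fderiv ℝ (fun y => fderiv ℝ u y e) x₀ e := by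
      rw [fderivWithin_of_mem_nhds hx₀S]
      congr 1
      apply Filter.EventuallyEq.fderiv_eq
      filter_upwards [isOpen_ball.mem_nhds hx] with y hy
      rw [fderivWithin_of_mem_nhds (hSnhds hy)]
    rw [heq1]
    have hC : ContDiffAt ℝ 2 u x₀ := hu.contDiffAt hx₀S
    have h1 : DifferentiableAt ℝ (fderiv ℝ u) x₀ :=
      (hC.fderiv_right (m := 1) (by norm_num)).differentiableAt (by norm_num)
    have hh : DifferentiableAt ℝ (fun y => fderiv ℝ u y e) x₀ :=
      h1.clm_apply (differentiableAt_const e)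
    have hF := hh.hasFDerivAt
    rw [← h0] at hF
    have := hF.comp_hasDerivAt 0 (hcA 0)
    rw [h0] at this
    exact this

lemma gradW_interior_zero {N : ℕ} {R : ℝ} {u : RE N → ℝ} {x₀ : RE N}
    (hx : x₀ ∈ ball (0:RE N) R) (hf0 : fderiv ℝ u x₀ = 0) : gradW R u x₀ = 0 := by
  have hSnd : closedBall (0:RE N) R ∈ 𝓝 x₀ :=
    Filter.mem_of_superset (isOpen_ball.mem_nhds hx) ball_subset_closedBall
  unfold gradW
  rw [show (fderivWithin ℝ u (closedBall (0:RE N) R) x₀) = 0 by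
    rw [fderivWithin_of_mem_nhds hSnd, hf0]]
  simp

lemma localmax_line {N : ℕ} {u : RE N → ℝ} {x₀ : RE N}
    (hlm : IsLocalMax u x₀) (e : RE N) :
    IsLocalMax (fun s : ℝ => u (x₀ + s • e)) 0 := by
  have h0 : x₀ + (0:ℝ) • e = x₀ := by rw [zero_smul, add_zero]
  have hcA : HasDerivAt (fun s : ℝ => x₀ + s • e) e 0 :=
    by simpa using ((hasDerivAt_id (0:ℝ)).smul_const e).const_add x₀
  have htend : Tendsto (fun s : ℝ => x₀ + s • e) (𝓝 0) (𝓝 x₀) := by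
    have := hcA.continuousAt
    rwa [ContinuousAt, h0] at this
  have hev : ∀ᶠ t in 𝓝 (0:ℝ), u (x₀ + t • e) ≤ u x₀ := htend.eventually hlm
  show ∀ᶠ t in 𝓝 (0:ℝ), u (x₀ + t • e) ≤ u (x₀ + (0:ℝ) • e)
  rw [h0]
  exact hev

lemma lapW_nonpos {N : ℕ} {R : ℝ} {u : RE N → ℝ} {x₀ : RE N}
    (hu : ContDiffOn ℝ 2 u (closedBall (0:RE N) R)) (hx : x₀ ∈ ball (0:RE N) R)
    (hmax : IsMaxOn u (closedBall (0:RE N) R) x₀) : lapW R u x₀ ≤ 0 := by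
  have hSnd : closedBall (0:RE N) R ∈ 𝓝 x₀ :=
    Filter.mem_of_superset (isOpen_ball.mem_nhds hx) ball_subset_closedBall
  have hlm : IsLocalMax u x₀ := hmax.isLocalMax hSnd
  have hf0 : fderiv ℝ u x₀ = 0 := hlm.fderiv_eq_zero
  unfold lapW
  apply Finset.sum_nonpos
  intro i _
  obtain ⟨h1, h2⟩ := deriv_data hu hx (EuclideanSpace.single i (1:ℝ))
  refine oneD_max (localmax_line hlm _) h1 ?_ h2
  rw [show x₀ + (0:ℝ) • EuclideanSpace.single i (1:ℝ) = x₀ by rw [zero_smul, add_zero], hf0]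
  simp

lemma lapW_nonneg {N : ℕ} {R : ℝ} {u : RE N → ℝ} {x₀ : RE N}
    (hu : ContDiffOn ℝ 2 u (closedBall (0:RE N) R)) (hx : x₀ ∈ ball (0:RE N) R)
    (hmin : IsMinOn u (closedBall (0:RE N) R) x₀) : 0 ≤ lapW R u x₀ := by
  have hSnd : closedBall (0:RE N) R ∈ 𝓝 x₀ :=
    Filter.mem_of_superset (isOpen_ball.mem_nhds hx) ball_subset_closedBall
  have hlm : IsLocalMin u x₀ := hmin.isLocalMin hSnd
  have hf0 : fderiv ℝ u x₀ = 0 := hlm.fderiv_eq_zero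
  unfold lapW
  apply Finset.sum_nonneg
  intro i _
  obtain ⟨h1, h2⟩ := deriv_data hu hx (EuclideanSpace.single i (1:ℝ))
  have hlmax : IsLocalMax (fun x => -u x) x₀ := hlm.neg
  refine oneD_min ?_ h1 ?_ h2
  · -- IsLocalMin of the line function
    have h0 : x₀ + (0:ℝ) • EuclideanSpace.single i (1:ℝ) = x₀ := by rw [zero_smul, add_zero]
    have hcA : HasDerivAt (fun s : ℝ => x₀ + s • EuclideanSpace.single i (1:ℝ))
        (EuclideanSpace.single i (1:ℝ)) 0 :=
      by simpa using ((hasDerivAt_id (0:ℝ)).smul_const (EuclideanSpace.single i (1:ℝ))).const_add x₀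
    have htend : Tendsto (fun s : ℝ => x₀ + s • EuclideanSpace.single i (1:ℝ)) (𝓝 0) (𝓝 x₀) := by
      have := hcA.continuousAt
      rwa [ContinuousAt, h0] at this
    have hev := htend.eventually hlm
    show ∀ᶠ t in 𝓝 (0:ℝ), u (x₀ + (0:ℝ) • EuclideanSpace.single i (1:ℝ))
      ≤ u (x₀ + t • EuclideanSpace.single i (1:ℝ))
    rw [h0]
    exact hev
  · rw [show x₀ + (0:ℝ) • EuclideanSpace.single i (1:ℝ) = x₀ by rw [zero_smul, add_zero], hf0]
    simp

lemma projR_mem {N : ℕ} {R : ℝ} (hR : 0 < R) (y : RE N) :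
    projR R y ∈ closedBall (0:RE N) R := by
  unfold projR
  split_ifs with h
  · simpa [mem_closedBall_zero_iff] using h
  · push_neg at h
    have hy : 0 < ‖y‖ := lt_trans hR h
    rw [mem_closedBall_zero_iff, norm_smul, Real.norm_eq_abs, abs_div, abs_of_pos hR, abs_norm,
      div_mul_cancel₀ _ (ne_of_gt hy)]

lemma TM_nonpos {M s : ℝ} (hM : 0 ≤ M) (hs : s ≤ 0) : TM M s ≤ 0 :=
  le_trans (min_le_left _ _) (max_le hs (by linarith))

lemma TM_nonneg {M s : ℝ} (hM : 0 ≤ M) (hs : 0 ≤ s) : 0 ≤ TM M s :=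
  le_min (le_trans hs (le_max_left _ _)) hM

lemma LRk_nonpos_at_max {N P : ℕ} (ν₁ ν₂ : Measure (RE P)) (j₁ j₂ : RE N → RE P → RE N)
    {R : ℝ} {u : RE N → ℝ} {x₀ : RE N} (hR : 0 < R)
    (hgrad : gradW R u x₀ = 0) (hmax : IsMaxOn u (closedBall (0:RE N) R) x₀) :
    LRk ν₁ ν₂ j₁ j₂ R u x₀ ≤ 0 := by
  unfold LRk
  simp only [hgrad, inner_zero_left, ite_self, sub_zero]
  have key : ∀ y : RE N, u (projR R y) - u x₀ ≤ 0 := fun y =>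
    sub_nonpos.2 (hmax (projR_mem hR y))
  exact add_nonpos (integral_nonpos (Pi.le_def.mpr fun z => key _)) (integral_nonpos (Pi.le_def.mpr fun z => key _))

lemma LRk_nonneg_at_min {N P : ℕ} (ν₁ ν₂ : Measure (RE P)) (j₁ j₂ : RE N → RE P → RE N)
    {R : ℝ} {u : RE N → ℝ} {x₀ : RE N} (hR : 0 < R)
    (hgrad : gradW R u x₀ = 0) (hmin : IsMinOn u (closedBall (0:RE N) R) x₀) :
    0 ≤ LRk ν₁ ν₂ j₁ j₂ R u x₀ := by
  unfold LRk
  simp only [hgrad, inner_zero_left, ite_self, sub_zero]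
  have key : ∀ y : RE N, 0 ≤ u (projR R y) - u x₀ := fun y =>
    sub_nonneg.2 (hmin (projR_mem hR y))
  exact add_nonneg (integral_nonneg fun z => key _) (integral_nonneg fun z => key _)

lemma apriori_aux
    {N P : ℕ} (ν₁ ν₂ : Measure (RE P)) (j₁ j₂ : RE N → RE P → RE N)
    (f : RE N → ℝ)
    (ε R M : ℝ) (hε : 0 < ε) (hR : 0 < R) (hM : 0 < M)
    (u : RE N → ℝ)
    (hu : ContDiffOn ℝ 2 u (closedBall (0 : RE N) R))
    (hueq : ∀ x ∈ ball (0 : RE N) R,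
      u x - TM M (LRk ν₁ ν₂ j₁ j₂ R u x) - ε * lapW R u x = f x)
    (hubc : ∀ x ∈ sphere (0 : RE N) R, u x = 0) :
    ∀ Cf : ℝ, (∀ x : RE N, |f x| ≤ Cf) → ∀ x ∈ ball (0 : RE N) R, |u x| ≤ Cf := by
  intro Cf hCf x hx
  have hCf0 : 0 ≤ Cf := le_trans (abs_nonneg _) (hCf 0)
  have hSc : IsCompact (closedBall (0:RE N) R) := isCompact_closedBall _ _
  have hSne : (closedBall (0:RE N) R).Nonempty := ⟨0, mem_closedBall_self hR.le⟩
  have hucont : ContinuousOn u (closedBall (0:RE N) R) := hu.continuousOn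
  obtain ⟨x₀, hx₀S, hx₀max⟩ := hSc.exists_isMaxOn hSne hucont
  obtain ⟨x₁, hx₁S, hx₁min⟩ := hSc.exists_isMinOn hSne hucont
  have hboundary : ∀ y : RE N, y ∈ closedBall (0:RE N) R → y ∉ ball (0:RE N) R → u y = 0 := by
    intro y hyS hyB
    apply hubc
    rw [mem_sphere_zero_iff_norm]
    rw [mem_closedBall_zero_iff] at hyS
    rw [mem_ball_zero_iff] at hyB
    exact le_antisymm hyS (not_lt.1 hyB)
  rw [abs_le]
  constructor
  · -- lower bound via min point
    have hux : u x₁ ≤ u x := hx₁min (ball_subset_closedBall hx)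
    by_cases hint : x₁ ∈ ball (0:RE N) R
    · have hSnd : closedBall (0:RE N) R ∈ 𝓝 x₁ :=
        Filter.mem_of_superset (isOpen_ball.mem_nhds hint) ball_subset_closedBall
      have hlm : IsLocalMin u x₁ := hx₁min.isLocalMin hSnd
      have hgrad : gradW R u x₁ = 0 := gradW_interior_zero hint hlm.fderiv_eq_zero
      have hlap : 0 ≤ lapW R u x₁ := lapW_nonneg hu hint hx₁min
      have hL : 0 ≤ LRk ν₁ ν₂ j₁ j₂ R u x₁ := LRk_nonneg_at_min ν₁ ν₂ j₁ j₂ hR hgrad hx₁min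
      have hTM : 0 ≤ TM M (LRk ν₁ ν₂ j₁ j₂ R u x₁) := TM_nonneg hM.le hL
      have heq := hueq x₁ hint
      have hfl := (abs_le.1 (hCf x₁)).1
      nlinarith
    · have := hboundary x₁ hx₁S hint
      linarith
  · have hux : u x ≤ u x₀ := hx₀max (ball_subset_closedBall hx)
    by_cases hint : x₀ ∈ ball (0:RE N) R
    · have hSnd : closedBall (0:RE N) R ∈ 𝓝 x₀ :=
        Filter.mem_of_superset (isOpen_ball.mem_nhds hint) ball_subset_closedBall
      have hlm : IsLocalMax u x₀ := hx₀max.isLocalMax hSnd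
      have hgrad : gradW R u x₀ = 0 := gradW_interior_zero hint hlm.fderiv_eq_zero
      have hlap : lapW R u x₀ ≤ 0 := lapW_nonpos hu hint hx₀max
      have hL : LRk ν₁ ν₂ j₁ j₂ R u x₀ ≤ 0 := LRk_nonpos_at_max ν₁ ν₂ j₁ j₂ hR hgrad hx₀max
      have hTM : TM M (LRk ν₁ ν₂ j₁ j₂ R u x₀) ≤ 0 := TM_nonpos hM.le hL
      have heq := hueq x₀ hint
      have hfu := (abs_le.1 (hCf x₀)).2
      nlinarith
    · have := hboundary x₀ hx₀S hint
      linarith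

/-- A priori `L^∞` bound for classical solutions of the approximate problem
`u - T_M[L^R_k[u,Du]] - εΔu = f` in `B_R` with `u = 0` on `∂B_R`. -/
theorem apriori_bound_approximate_problem
    (N P : ℕ) (hN : 1 ≤ N) (hP : 1 ≤ P)
    (μ₁ μ₂ : Measure (RE P)) (j₁ j₂ : RE N → RE P → RE N)
    (ρ : RE P → ℝ) (f : RE N → ℝ)
    -- the mollifier
    (hρsmooth : ContDiff ℝ (⊤ : ℕ∞) ρ) (hρnonneg : ∀ z, 0 ≤ ρ z)
    (hρsymm : ∀ z, ρ (-z) = ρ z)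
    (hρsupp : Function.support ρ ⊆ ball (0 : RE P) 1)
    (hρint : ∫ z, ρ z = 1)
    -- (M)
    (hM0 : μ₁ {0} = 0) (hM0' : μ₂ {0} = 0)
    (hM1 : (∫⁻ z, (‖z‖₊ : ℝ≥0∞) ^ 2 ∂μ₁) < ⊤)
    (hM2 : μ₂ Set.univ < ⊤)
    -- (J1'): measurable, locally bounded, continuous in p for a.e. z, |j₁(p,z)| ≤ C_r|z|
    (hj₁m : Measurable (Function.uncurry j₁))
    (hj₂m : Measurable (Function.uncurry j₂))
    (hloc : ∀ r > (0:ℝ), ∃ C : ℝ, ∀ p : RE N, ∀ z : RE P, ‖p‖ ≤ r → ‖z‖ ≤ r →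
      ‖j₁ p z‖ ≤ C ∧ ‖j₂ p z‖ ≤ C)
    (hj₁c : ∀ᵐ z ∂μ₁, Continuous fun p => j₁ p z)
    (hj₂c : ∀ᵐ z ∂μ₂, Continuous fun p => j₂ p z)
    (hJ1' : ∀ r > (0:ℝ), ∃ C : ℝ, ∀ p : RE N, ∀ z : RE P, ‖p‖ ≤ r → ‖z‖ < 1 →
      ‖j₁ p z‖ ≤ C * ‖z‖)
    -- the parameters
    (ε R M : ℝ) (hε : 0 < ε) (hR : 0 < R) (hM : 0 < M) (k : ℕ) (hk : 1 ≤ k)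
    -- f bounded and continuous
    (hfc : Continuous f)
    -- u : classical solution of the approximate problem
    (u : RE N → ℝ)
    (hu : ContDiffOn ℝ 2 u (closedBall (0 : RE N) R))
    (hueq : ∀ x ∈ ball (0 : RE N) R,
      u x - TM M (LRk (mollify1 ρ k μ₁) (mollify2 ρ k μ₂) j₁ j₂ R u x)
        - ε * lapW R u x = f x)
    (hubc : ∀ x ∈ sphere (0 : RE N) R, u x = 0) :
    ∀ Cf : ℝ, (∀ x : RE N, |f x| ≤ Cf) → ∀ x ∈ ball (0 : RE N) R, |u x| ≤ Cf := by
  exact apriori_aux (mollify1 ρ k μ₁) (mollify2 ρ k μ₂) j₁ j₂ f ε R M hε hR hM u hu hueq hubc
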